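/- Let D be a self-adjoint operator on a finite-dimensional Hilbert space with ‖D‖ ≤ 1, let v be a unit vector, let t ≥ 1, ε' > 0, and let τ ≥ √(2t·ln(2/ε')). Let p_l be the Chebyshev expansion coefficients of x^t. Then ‖ ∑_{l=0}^{τ} p_l T_l(D) v − D^t v ‖ ≤ ε'. -/

import Mathlib

/-!
Write `X_t = 2 Bin(t, 1/2) - t` for the simple random walk. The binomial theorem applied to
`cos θ = (e^{iθ} + e^{-iθ}) / 2` gives `cos^t θ = 𝔼 cos (X_t θ) = ∑_l p_l cos (l θ)`, so on
`[-1, 1]` the truncated expansion differs from `x^t` by at most `P(|X_t| > τ)`. The Chernoff bound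
`P(|X_t| > τ) ≤ 2 e^{-sτ} cosh^t s ≤ 2 e^{t s² / 2 - sτ}` at `s = τ / t` makes this at most
`2 e^{-τ² / 2t} ≤ ε'`. An orthonormal eigenbasis of `D`, whose eigenvalues lie in `[-1, 1]`,
transfers the scalar bound to the operator.
-/

open Polynomial Finset Real

/-- Coefficients of the Chebyshev expansion of `x^t`: `p t l = P(|X_t| = l)` for a
`t`-step simple random walk on `ℤ` started at the origin. -/
noncomputable def chebCoeff (t l : ℕ) : ℝ :=
  if l = 0 then (if t % 2 = 0 then (t.choose (t / 2) : ℝ) / 2 ^ t else 0)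
  else if l ≤ t ∧ l % 2 = t % 2 then (t.choose ((t - l) / 2) : ℝ) / 2 ^ (t - 1) else 0

lemma Complex.cosh_pow_eq_sum_choose_mul_exp (z : ℂ) (t : ℕ) :
    Complex.cosh z ^ t =
      ∑ k ∈ range (t + 1), (t.choose k / 2 ^ t : ℂ) * Complex.exp ((2 * k - t) * z) := by
  rw [Complex.cosh, div_pow, add_pow, sum_div]
  refine sum_congr rfl fun k hk => ?_
  have hkt : k ≤ t := Nat.lt_succ_iff.mp (mem_range.mp hk)
  rw [← Complex.exp_nat_mul, ← Complex.exp_nat_mul, ← Complex.exp_add, Nat.cast_sub hkt]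
  ring_nf

lemma Real.cosh_pow_eq_sum_choose_mul_exp (a : ℝ) (t : ℕ) :
    cosh a ^ t = ∑ k ∈ range (t + 1), (t.choose k / 2 ^ t : ℝ) * exp ((2 * k - t) * a) := by
  apply Complex.ofReal_injective
  push_cast
  exact Complex.cosh_pow_eq_sum_choose_mul_exp a t

lemma Real.cos_pow_eq_sum_choose_mul_cos (θ : ℝ) (t : ℕ) :
    cos θ ^ t = ∑ k ∈ range (t + 1), (t.choose k / 2 ^ t : ℝ) * cos ((2 * k - t) * θ) := by
  have h := congrArg Complex.re (Complex.cosh_pow_eq_sum_choose_mul_exp (θ * Complex.I) t)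
  rw [Complex.cosh_mul_I, ← Complex.ofReal_cos, ← Complex.ofReal_pow, Complex.ofReal_re] at h
  rw [h, Complex.re_sum]
  refine sum_congr rfl fun k _ => ?_
  have hreal : (t.choose k / 2 ^ t : ℂ) * Complex.exp ((2 * k - t) * (θ * Complex.I))
      = ((t.choose k / 2 ^ t : ℝ) : ℂ) * Complex.exp (((2 * k - t) * θ : ℝ) * Complex.I) := by
    push_cast; ring_nf
  rw [hreal, Complex.re_ofReal_mul, Complex.exp_ofReal_mul_I_re]

lemma chebCoeff_eq_sum_choose (t l : ℕ) :
    chebCoeff t l = ∑ k ∈ (range (t + 1)).filter (fun k : ℕ => (2 * (k : ℤ) - t).natAbs = l),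
      (t.choose k : ℝ) / 2 ^ t := by
  unfold chebCoeff
  rcases Nat.eq_zero_or_pos l with rfl | hl
  · by_cases ht : t % 2 = 0
    · have hfib : (range (t + 1)).filter (fun k : ℕ => (2 * (k : ℤ) - t).natAbs = 0)
          = {t / 2} := by
        ext k; simp only [mem_filter, mem_range, mem_singleton]; omega
      rw [hfib, sum_singleton, if_pos rfl, if_pos ht]
    · have hfib : (range (t + 1)).filter (fun k : ℕ => (2 * (k : ℤ) - t).natAbs = 0) = ∅ := by
        ext k; simp only [mem_filter, mem_range, notMem_empty, iff_false]; omega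
      rw [hfib, sum_empty, if_pos rfl, if_neg ht]
  rw [if_neg hl.ne']
  by_cases hlt : l ≤ t ∧ l % 2 = t % 2
  · have hfib : (range (t + 1)).filter (fun k : ℕ => (2 * (k : ℤ) - t).natAbs = l)
        = {(t - l) / 2, (t + l) / 2} := by
      ext k; simp only [mem_filter, mem_range, mem_insert, mem_singleton]; omega
    have hsymm : t.choose ((t + l) / 2) = t.choose ((t - l) / 2) := by
      rw [← Nat.choose_symm (by omega)]; congr 1; omega
    have hpow : (2 : ℝ) ^ t = 2 * 2 ^ (t - 1) := by rw [← pow_succ']; congr 1; omega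
    rw [hfib, sum_pair (by omega), hsymm, hpow, if_pos hlt]
    ring
  · have hfib : (range (t + 1)).filter (fun k : ℕ => (2 * (k : ℤ) - t).natAbs = l) = ∅ := by
      ext k; simp only [mem_filter, mem_range, notMem_empty, iff_false]; omega
    rw [hfib, sum_empty, if_neg hlt]

lemma sum_chebCoeff_smul {M : Type*} [AddCommMonoid M] [Module ℝ M] (t : ℕ) (f : ℕ → M) :
    ∑ l ∈ range (t + 1), chebCoeff t l • f l =
      ∑ k ∈ range (t + 1), ((t.choose k : ℝ) / 2 ^ t) • f (2 * (k : ℤ) - t).natAbs := by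
  simp_rw [chebCoeff_eq_sum_choose, sum_smul]
  refine (sum_congr rfl fun l _ => sum_congr rfl fun k hk => ?_).trans
    (sum_fiberwise_of_maps_to (fun k hk => ?_) _)
  · rw [(mem_filter.mp hk).2]
  · simp only [mem_range] at hk ⊢; omega

lemma chebCoeff_nonneg (t l : ℕ) : 0 ≤ chebCoeff t l := by
  rw [chebCoeff_eq_sum_choose]
  positivity

lemma chebCoeff_eq_zero_of_lt {t l : ℕ} (h : t < l) : chebCoeff t l = 0 := by
  simp only [chebCoeff]
  split_ifs <;> first | rfl | omega

lemma pow_eq_sum_chebCoeff_mul_eval_T {x : ℝ} (hx : x ∈ Set.Icc (-1) 1) (t : ℕ) :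
    x ^ t = ∑ l ∈ range (t + 1), chebCoeff t l * (Chebyshev.T ℝ l).eval x := by
  obtain ⟨θ, rfl⟩ : ∃ θ, cos θ = x := ⟨arccos x, cos_arccos hx.1 hx.2⟩
  simp_rw [← smul_eq_mul (a := chebCoeff t _), sum_chebCoeff_smul,
    Real.cos_pow_eq_sum_choose_mul_cos, Chebyshev.T_natAbs, Chebyshev.T_real_cos, smul_eq_mul]
  push_cast
  rfl

lemma sum_range_succ_eq_sub_sum_filter_lt {M : Type*} [AddCommGroup M] {a : ℕ → M} {t : ℕ}
    (ha : ∀ l, t < l → a l = 0) (τ : ℕ) :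
    ∑ l ∈ range (τ + 1), a l
      = ∑ l ∈ range (t + 1), a l - ∑ l ∈ (range (t + 1)).filter (τ < ·), a l := by
  rw [← sum_filter_add_sum_filter_not (range (t + 1)) (τ < ·), add_sub_cancel_left]
  refine (sum_subset (fun l hl => ?_) fun l hl hl' => ha l ?_).symm
  · simp only [mem_filter, mem_range] at hl ⊢; omega
  · simp only [mem_filter, mem_range] at hl hl'; omega

lemma abs_sum_chebCoeff_mul_eval_T_sub_pow_le {x : ℝ} (hx : x ∈ Set.Icc (-1) 1) (t τ : ℕ) :
    |∑ l ∈ range (τ + 1), chebCoeff t l * (Chebyshev.T ℝ l).eval x - x ^ t|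
      ≤ ∑ l ∈ (range (t + 1)).filter (τ < ·), chebCoeff t l := by
  rw [sum_range_succ_eq_sub_sum_filter_lt
      (fun l hl => by rw [chebCoeff_eq_zero_of_lt hl, zero_mul]),
    ← pow_eq_sum_chebCoeff_mul_eval_T hx, sub_sub_cancel_left, abs_neg]
  refine (abs_sum_le_sum_abs _ _).trans (sum_le_sum fun l _ => ?_)
  rw [abs_mul, abs_of_nonneg (chebCoeff_nonneg t l)]
  exact mul_le_of_le_one_right (chebCoeff_nonneg t l)
    (Chebyshev.abs_eval_T_real_le_one _ (abs_le.mpr hx))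

lemma ite_lt_abs_le_exp_mul {s : ℝ} (hs : 0 ≤ s) (τ y : ℝ) :
    (if τ < |y| then 1 else 0 : ℝ) ≤ exp (-(s * τ)) * (exp (y * s) + exp (y * -s)) := by
  split_ifs with h
  · have hexp : exp (|y| * s) ≤ exp (y * s) + exp (y * -s) := by
      rcases abs_choice y with hy | hy <;> rw [hy] <;> simp only [neg_mul, mul_neg] <;>
        linarith [exp_pos (y * s), exp_pos (-(y * s))]
    calc (1 : ℝ) ≤ exp (-(s * τ)) * exp (|y| * s) := by
          rw [← exp_add]; exact one_le_exp (by nlinarith)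
      _ ≤ _ := by gcongr
  · positivity

lemma sum_chebCoeff_filter_lt_le {t : ℕ} (ht : 0 < t) (τ : ℕ) :
    ∑ l ∈ (range (t + 1)).filter (τ < ·), chebCoeff t l ≤ 2 * exp (-(τ : ℝ) ^ 2 / (2 * t)) := by
  -- the minimiser of `t s² / 2 - s τ`
  set s : ℝ := τ / t
  have hs : 0 ≤ s := by positivity
  calc ∑ l ∈ (range (t + 1)).filter (τ < ·), chebCoeff t l
      = ∑ l ∈ range (t + 1), chebCoeff t l • (if τ < l then 1 else 0 : ℝ) := by
        rw [sum_filter]; simp only [smul_eq_mul, mul_ite, mul_one, mul_zero]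
    _ = ∑ k ∈ range (t + 1), (t.choose k / 2 ^ t : ℝ) *
          (if (τ : ℝ) < |(2 * k - t : ℝ)| then 1 else 0) := by
        rw [sum_chebCoeff_smul]
        refine sum_congr rfl fun k _ => ?_
        push_cast [smul_eq_mul, ← Nat.cast_lt (α := ℝ), Nat.cast_natAbs]
        rfl
    _ ≤ ∑ k ∈ range (t + 1), (t.choose k / 2 ^ t : ℝ) *
          (exp (-(s * τ)) * (exp ((2 * k - t) * s) + exp ((2 * k - t) * -s))) := by
        gcongr; exact ite_lt_abs_le_exp_mul hs _ _
    _ = 2 * exp (-(s * τ)) * cosh s ^ t := by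
        rw [show 2 * exp (-(s * τ)) * cosh s ^ t = exp (-(s * τ)) * (cosh s ^ t + cosh (-s) ^ t)
          by rw [cosh_neg]; ring, Real.cosh_pow_eq_sum_choose_mul_exp,
          Real.cosh_pow_eq_sum_choose_mul_exp, ← sum_add_distrib, mul_sum]
        exact sum_congr rfl fun k _ => by ring
    _ ≤ 2 * exp (-(s * τ)) * exp (s ^ 2 / 2) ^ t := by gcongr; exact cosh_le_exp_half_sq s
    _ = 2 * exp (-(τ : ℝ) ^ 2 / (2 * t)) := by
        rw [← exp_nat_mul, mul_assoc, ← exp_add]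
        congr 2
        simp only [s]
        field_simp
        ring

lemma two_mul_exp_neg_sq_div_le {t τ ε : ℝ} (ht : 0 < t) (hε : 0 < ε)
    (hτ : √(2 * t * log (2 / ε)) ≤ τ) : 2 * exp (-τ ^ 2 / (2 * t)) ≤ ε := by
  have hlog : log (2 / ε) ≤ τ ^ 2 / (2 * t) := by
    rw [le_div_iff₀ (by positivity)]
    linarith [(sqrt_le_iff.mp hτ).2]
  calc 2 * exp (-τ ^ 2 / (2 * t)) ≤ 2 * exp (-log (2 / ε)) := by
        gcongr; rw [neg_div]; exact neg_le_neg hlog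
    _ = ε := by rw [exp_neg, exp_log (by positivity)]; field_simp

lemma EuclideanSpace.norm_toLp_mul_le {ι : Type*} [Fintype ι] {a : ι → ℝ} {c : ℝ} (hc : 0 ≤ c)
    (ha : ∀ i, |a i| ≤ c) (y : EuclideanSpace ℝ ι) :
    ‖(WithLp.toLp 2 fun i => a i * y i : EuclideanSpace ℝ ι)‖ ≤ c * ‖y‖ := by
  rw [← pow_le_pow_iff_left₀ (norm_nonneg _) (by positivity) two_ne_zero, mul_pow,
    EuclideanSpace.norm_sq_eq, EuclideanSpace.norm_sq_eq, mul_sum]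
  refine sum_le_sum fun i _ => ?_
  simp only [norm_mul, Real.norm_eq_abs, mul_pow]
  gcongr
  exact ha i

section Spectral

variable {E : Type*} [NormedAddCommGroup E] [InnerProductSpace ℝ E]

lemma ContinuousLinearMap.aeval_apply_of_apply_eq_smul {D : E →L[ℝ] E} {μ : ℝ} {x : E}
    (hx : D x = μ • x) (p : ℝ[X]) : aeval D p x = p.eval μ • x := by
  have h := aeval_algHom_apply (AlgHom.mk' ContinuousLinearMap.toLinearMapRingHom fun _ _ => rfl)
    D p
  exact (LinearMap.congr_fun h x).symm.trans (Module.End.aeval_apply_of_mem_apply_eq_smul hx)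

theorem IsSelfAdjoint.norm_aeval_apply_le [FiniteDimensional ℝ E] {D : E →L[ℝ] E}
    (hD : IsSelfAdjoint D) (hD₁ : ‖D‖ ≤ 1) {p : ℝ[X]} {c : ℝ}
    (hp : ∀ x ∈ Set.Icc (-1 : ℝ) 1, |p.eval x| ≤ c) (v : E) : ‖aeval D p v‖ ≤ c * ‖v‖ := by
  have hT := hD.isSymmetric
  set b := hT.eigenvectorBasis rfl
  set μ := hT.eigenvalues rfl
  have heigen (i) : D (b i) = μ i • b i := hT.apply_eigenvectorBasis rfl i
  have hμ (i) : μ i ∈ Set.Icc (-1 : ℝ) 1 := by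
    have h := D.le_opNorm (b i)
    rw [heigen, norm_smul, b.orthonormal.1 i, Real.norm_eq_abs, mul_one, mul_one] at h
    exact abs_le.mp (h.trans hD₁)
  have hdiag : aeval D p v = b.repr.symm (WithLp.toLp 2 fun i => p.eval (μ i) * b.repr v i) := by
    conv_lhs => rw [← b.sum_repr v]
    simp only [← b.sum_repr_symm, map_sum, map_smul, D.aeval_apply_of_apply_eq_smul (heigen _),
      smul_smul, mul_comm]
  rw [hdiag, b.repr.symm.norm_map, ← b.repr.norm_map v]
  exact EuclideanSpace.norm_toLp_mul_le ((abs_nonneg _).trans (hp 0 (by norm_num)))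
    (fun i => hp _ (hμ i)) _

end Spectral

/-- Truncated Chebyshev approximation of `D^t v` for a self-adjoint contraction `D`
on a finite-dimensional Hilbert space: with `τ ≥ √(2t ln(2/ε'))` terms, the error is
at most `ε'`. -/
theorem truncated_chebyshev_operator_approx
    {E : Type*} [NormedAddCommGroup E] [InnerProductSpace ℝ E] [FiniteDimensional ℝ E]
    (D : E →L[ℝ] E) (hD : IsSelfAdjoint D) (hDnorm : ‖D‖ ≤ 1)
    (v : E) (hv : ‖v‖ = 1) (t : ℕ) (ht : 1 ≤ t) (ε' : ℝ) (hε' : 0 < ε')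
    (τ : ℕ) (hτ : Real.sqrt (2 * t * Real.log (2 / ε')) ≤ τ) :
    ‖(∑ l ∈ Finset.range (τ + 1),
        chebCoeff t l • (Polynomial.aeval D (Polynomial.Chebyshev.T ℝ (l : ℤ))) v)
      - (D ^ t) v‖ ≤ ε' := by
  set q : ℝ[X] := ∑ l ∈ range (τ + 1), chebCoeff t l • Chebyshev.T ℝ l - X ^ t
  have hq : ∀ x ∈ Set.Icc (-1 : ℝ) 1, |q.eval x| ≤ ε' := fun x hx => by
    simp only [q, eval_sub, eval_finsetSum, eval_smul, eval_pow, eval_X, smul_eq_mul]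
    exact (abs_sum_chebCoeff_mul_eval_T_sub_pow_le hx t τ).trans
      ((sum_chebCoeff_filter_lt_le ht τ).trans (two_mul_exp_neg_sq_div_le (by positivity) hε' hτ))
  have hqD : aeval D q v = ∑ l ∈ range (τ + 1), chebCoeff t l • aeval D (Chebyshev.T ℝ l) v
      - (D ^ t) v := by
    simp [q]
  simpa [hqD, hv] using hD.norm_aeval_apply_le hDnorm hq v
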